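/- arXiv:1108.3385 — 2 statements merged into one kernel-verified Lean document; each statement's English description precedes it below -/
import Mathlib

section
/- Let d ≥ 1, γ > −1, and in d+1 variables set P_4 = S_{(4)} + a·S_{(3,1)} + b·S_{(2,2)} with a = −4(γ+4)/(d(γ+1)) and b = 6(γ+3)(γ+4)/(d(γ+1)(γ+2)). Then for every 1 ≤ k ≤ d+1, evaluating at the vector v_k with k ones followed by zeros gives P_4(v_k) = k·( d(γ+1)(γ+2) + (1−γ)(γ+4)(k−1) ) / ( d(γ+1)(γ+2) ), and this value is strictly positive. -/
/-!
At a `0/1`-vector with `m` ones the three monomial symmetric polynomials count the ones,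
the ordered pairs and the unordered pairs of ones: `S_{(4)} = m`, `S_{(3,1)} = m(m-1)` and
`S_{(2,2)} = m(m-1)/2`. Substituting `a` and `b` gives the closed form. Its numerator equals
`(d+1-k)(γ+1)(γ+2) + 6(k-1)`, a sum of two nonnegative terms that do not vanish together.
-/

open MeasureTheory Finset

/-- `P_4 = S_{(4)} + a S_{(3,1)} + b S_{(2,2)}` in `d+1` real variables. -/
noncomputable def P4eval (d : ℕ) (a b : ℝ) (x : Fin (d + 1) → ℝ) : ℝ :=
  (∑ i, x i ^ 4)
    + a * ∑ i, ∑ j ∈ Finset.univ.filter (fun j => j ≠ i), x i ^ 3 * x j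
    + b * ∑ i, ∑ j ∈ Finset.univ.filter (fun j => i < j), x i ^ 2 * x j ^ 2

/-- `v_k = (1,…,1,0,…,0)` with `k` ones, in `d+1` coordinates. -/
def vk (d k : ℕ) : Fin (d + 1) → ℝ :=
  fun i => if (i : ℕ) < k then 1 else 0

section OffDiagonalSums

variable {ι R : Type*} [Fintype ι]

theorem sum_sum_ne_mul [CommRing R] [DecidableEq ι] (x y : ι → R) :
    ∑ i, ∑ j ∈ univ.filter (fun j => j ≠ i), x i * y j
      = (∑ i, x i) * (∑ j, y j) - ∑ i, x i * y i := by
  simp_rw [filter_ne', ← mul_sum, sum_erase_eq_sub (mem_univ _)]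
  rw [sum_mul, ← sum_sub_distrib]
  simp_rw [mul_sub]

theorem sum_sum_ne_eq_two_mul_sum_sum_lt [CommSemiring R] [LinearOrder ι] (f : ι → ι → R)
    (hf : ∀ i j, f i j = f j i) :
    ∑ i, ∑ j ∈ univ.filter (fun j => j ≠ i), f i j
      = 2 * ∑ i, ∑ j ∈ univ.filter (fun j => i < j), f i j := by
  have split (i : ι) : ∑ j ∈ univ.filter (fun j => j ≠ i), f i j
      = ∑ j ∈ univ.filter (fun j => j < i), f i j
        + ∑ j ∈ univ.filter (fun j => i < j), f i j := by
    rw [← sum_union (disjoint_filter.2 fun j _ h h' => lt_asymm h h')]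
    congr 1
    ext j
    simp [lt_or_lt_iff_ne]
  have swap : ∑ i, ∑ j ∈ univ.filter (fun j => j < i), f i j
      = ∑ j, ∑ i ∈ univ.filter (fun i => j < i), f j i := by
    rw [sum_comm' (t' := univ) (s' := fun j => univ.filter (fun i => j < i)) (by simp)]
    simp_rw [hf]
  simp_rw [split, sum_add_distrib, swap]
  ring

end OffDiagonalSums

theorem P4eval_of_isIdempotentElem (d : ℕ) (a b : ℝ) (x : Fin (d + 1) → ℝ)
    (hx : ∀ i, IsIdempotentElem (x i)) (m : ℝ) (hm : ∑ i, x i = m) :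
    P4eval d a b x = m + a * (m ^ 2 - m) + b * ((m ^ 2 - m) / 2) := by
  have hoff : ∑ i, ∑ j ∈ univ.filter (fun j => j ≠ i), x i * x j = m ^ 2 - m := by
    simp_rw [sum_sum_ne_mul, fun i => (hx i).eq, hm, sq]
  have h4 : ∑ i, x i ^ 4 = m := by simp_rw [fun i => (hx i).pow_eq four_ne_zero, hm]
  have h31 : ∑ i, ∑ j ∈ univ.filter (fun j => j ≠ i), x i ^ 3 * x j = m ^ 2 - m := by
    simp_rw [fun i => (hx i).pow_eq three_ne_zero, hoff]
  have h22 : ∑ i, ∑ j ∈ univ.filter (fun j => i < j), x i ^ 2 * x j ^ 2 = (m ^ 2 - m) / 2 := by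
    rw [← hoff, sum_sum_ne_eq_two_mul_sum_sum_lt _ fun i j => mul_comm _ _]
    simp_rw [fun i => (hx i).pow_eq two_ne_zero]
    ring
  rw [P4eval, h4, h31, h22]

theorem isIdempotentElem_vk (d k : ℕ) (i : Fin (d + 1)) : IsIdempotentElem (vk d k i) := by
  unfold vk; split_ifs <;> simp [IsIdempotentElem]

theorem sum_vk {d k : ℕ} (hkd : k ≤ d + 1) : ∑ i, vk d k i = k := by
  simp [vk, sum_boole, Fin.card_filter_val_lt, hkd]

theorem P4_vk_numerator_pos {d k γ : ℝ} (hd : 0 < d) (hγ : -1 < γ) (hk1 : 1 ≤ k)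
    (hkd : k ≤ d + 1) : 0 < d * (γ + 1) * (γ + 2) + (1 - γ) * (γ + 4) * (k - 1) := by
  have hsplit : d * (γ + 1) * (γ + 2) + (1 - γ) * (γ + 4) * (k - 1)
      = (d + 1 - k) * ((γ + 1) * (γ + 2)) + 6 * (k - 1) := by ring
  have hγ12 : 0 < (γ + 1) * (γ + 2) := mul_pos (by linarith) (by linarith)
  rw [hsplit]
  rcases hk1.lt_or_eq with hk | rfl
  · exact add_pos_of_nonneg_of_pos (mul_nonneg (by linarith) hγ12.le) (by linarith)
  · simpa using mul_pos hd hγ12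

/-- The value of `P_4` at `v_k` and its strict positivity. -/
theorem P4_value_at_vk_pos
    (d : ℕ) (hd : 1 ≤ d) (γ : ℝ) (hγ : -1 < γ) (a b : ℝ)
    (ha : a = -(4 * (γ + 4)) / (d * (γ + 1)))
    (hb : b = 6 * (γ + 3) * (γ + 4) / (d * (γ + 1) * (γ + 2)))
    (k : ℕ) (hk1 : 1 ≤ k) (hkd : k ≤ d + 1) :
    P4eval d a b (vk d k)
        = (k : ℝ) * ((d : ℝ) * (γ + 1) * (γ + 2) + (1 - γ) * (γ + 4) * ((k : ℝ) - 1)) /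
            ((d : ℝ) * (γ + 1) * (γ + 2))
      ∧ 0 < (k : ℝ) * ((d : ℝ) * (γ + 1) * (γ + 2) + (1 - γ) * (γ + 4) * ((k : ℝ) - 1)) /
            ((d : ℝ) * (γ + 1) * (γ + 2)) := by
  have hd' : (0 : ℝ) < d := by exact_mod_cast hd
  have hγ1 : (0 : ℝ) < γ + 1 := by linarith
  have hγ2 : (0 : ℝ) < γ + 2 := by linarith
  have hk1' : (1 : ℝ) ≤ k := by exact_mod_cast hk1
  have hkd' : (k : ℝ) ≤ d + 1 := by exact_mod_cast hkd
  refine ⟨?_, div_pos (mul_pos (by linarith) (P4_vk_numerator_pos hd' hγ hk1' hkd')) (by positivity)⟩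
  rw [P4eval_of_isIdempotentElem d a b _ (isIdempotentElem_vk d k) k (sum_vk hkd), ha, hb]
  field_simp
  ring
end

section
/- Let d ≥ 1 and γ > −1. There do not exist N ≥ 1, points x_1,…,x_N ∈ T^d and strictly positive weights λ_1,…,λ_N such that (a) w_γ ∫_{T^d} f(x) W_γ(x) dx = Σ_{k=1}^N λ_k f(x_k) for every polynomial f of degree at most 4 in d variables, and (b) for every k, all nonzero coordinates of the homogeneous coordinate vector ξ_k = (x_k, 1−|x_k|_1) ∈ 𝒯^{d+1} are equal to one another. In particular, a symmetric cubature rule of degree n ≥ 4 for W_γ on T^d whose nodes are the centroid and permutation orbits of points (r,…,r,0,…,0) cannot be positive. -/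
open MeasureTheory Finset

/-- The standard simplex `T^d` in `ℝ^d`. -/
def Td (d : ℕ) : Set (Fin d → ℝ) :=
  {x | (∀ i, 0 ≤ x i) ∧ ∑ i, x i ≤ 1}

/-- The weight function `W_γ(x) = (x_1 ⋯ x_d (1 - |x|₁))^γ` on `T^d`. -/
noncomputable def Wg (d : ℕ) (γ : ℝ) (x : Fin d → ℝ) : ℝ :=
  ((∏ i, x i) * (1 - ∑ i, x i)) ^ γ

/-- The normalization constant `w_γ = Γ((d+1)(γ+1)) / Γ(γ+1)^(d+1)`. -/
noncomputable def wg (d : ℕ) (γ : ℝ) : ℝ :=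
  Real.Gamma ((d + 1) * (γ + 1)) / (Real.Gamma (γ + 1)) ^ (d + 1)

/-- Homogeneous coordinates: `x ↦ (x, 1 - |x|₁) ∈ 𝒯^{d+1}`. -/
noncomputable def lift (d : ℕ) (x : Fin d → ℝ) : Fin (d + 1) → ℝ :=
  Fin.snoc x (1 - ∑ i, x i)

/-!
For `ξ : ι → R`, the quartic form `(∑ ξ)(∑ ξ³) - (∑ ξ²)²` equals
`½ ∑_{i,j} ξᵢ ξⱼ (ξᵢ - ξⱼ)²`. Evaluated at the homogeneous coordinates of `x ∈ T^d` it is a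
polynomial of degree `4` in `x` that is nonnegative on `T^d`, vanishes at every point whose nonzero
homogeneous coordinates are all equal, and is positive somewhere in the interior, where `W_γ > 0`.
A positive rule with such nodes would integrate it to `0`, whereas its `W_γ`-integral is positive;
here `W_γ` is integrable and `w_γ ≠ 0` because the rule gives `f = 1` the positive value `∑ λₖ`.
-/

section MomentGap

variable {ι R : Type*} [Fintype ι]

def momentGap [CommRing R] (ξ : ι → R) : R :=
  (∑ i, ξ i) * (∑ i, ξ i ^ 3) - (∑ i, ξ i ^ 2) ^ 2

theorem two_mul_momentGap [CommRing R] (ξ : ι → R) :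
    2 * momentGap ξ = ∑ i, ∑ j, ξ i * ξ j * (ξ i - ξ j) ^ 2 := by
  have hterm : ∀ i j, ξ i * ξ j * (ξ i - ξ j) ^ 2
      = ξ j * ξ i ^ 3 + ξ i * ξ j ^ 3 - 2 * (ξ i ^ 2 * ξ j ^ 2) := fun i j => by ring
  simp only [hterm, sum_add_distrib, sum_sub_distrib, ← mul_sum, ← sum_mul]
  rw [momentGap]
  ring

theorem map_momentGap {S : Type*} [CommRing R] [CommRing S] (f : R →+* S) (ξ : ι → R) :
    f (momentGap ξ) = momentGap (f ∘ ξ) := by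
  simp [momentGap]

variable [CommRing R] [LinearOrder R] [IsStrictOrderedRing R] {ξ : ι → R}

theorem momentGap_nonneg (hξ : ∀ i, 0 ≤ ξ i) : 0 ≤ momentGap ξ := by
  have : 0 ≤ 2 * momentGap ξ := by
    rw [two_mul_momentGap]
    exact sum_nonneg fun i _ => sum_nonneg fun j _ => by have := hξ i; have := hξ j; positivity
  linarith

theorem momentGap_eq_zero_of_nonzero_coords_eq
    (hξ : ∀ i j, ξ i ≠ 0 → ξ j ≠ 0 → ξ i = ξ j) : momentGap ξ = 0 := by
  have : 2 * momentGap ξ = 0 := by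
    rw [two_mul_momentGap]
    refine sum_eq_zero fun i _ => sum_eq_zero fun j _ => ?_
    by_cases hi : ξ i = 0
    · simp [hi]
    by_cases hj : ξ j = 0
    · simp [hj]
    simp [hξ i j hi hj]
  linarith

theorem momentGap_pos (hξ : ∀ i, 0 ≤ ξ i) {i j : ι} (hi : 0 < ξ i) (hj : 0 < ξ j)
    (hij : ξ i ≠ ξ j) : 0 < momentGap ξ := by
  have hterm : ∀ k l, 0 ≤ ξ k * ξ l * (ξ k - ξ l) ^ 2 := fun k l => by
    have := hξ k; have := hξ l; positivity
  have : 0 < 2 * momentGap ξ := by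
    rw [two_mul_momentGap]
    calc 0 < ξ i * ξ j * (ξ i - ξ j) ^ 2 := by
          have : ξ i - ξ j ≠ 0 := sub_ne_zero.2 hij
          positivity
      _ ≤ ∑ l, ξ i * ξ l * (ξ i - ξ l) ^ 2 :=
          single_le_sum (fun l _ => hterm i l) (mem_univ j)
      _ ≤ ∑ k, ∑ l, ξ k * ξ l * (ξ k - ξ l) ^ 2 :=
          single_le_sum (fun k _ => sum_nonneg fun l _ => hterm k l) (mem_univ i)
  linarith

end MomentGap

section Degree

open MvPolynomial

variable {σ ι R : Type*} [Fintype ι] [CommRing R]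

theorem totalDegree_sum_pow_le {p : ι → MvPolynomial σ R} (hp : ∀ i, (p i).totalDegree ≤ 1)
    (k : ℕ) : (∑ i, p i ^ k).totalDegree ≤ k :=
  (totalDegree_finsetSum _ _).trans <| Finset.sup_le fun i _ =>
    (totalDegree_pow _ _).trans <| by simpa using Nat.mul_le_mul_left k (hp i)

theorem totalDegree_momentGap_le {p : ι → MvPolynomial σ R} (hp : ∀ i, (p i).totalDegree ≤ 1) :
    (momentGap p).totalDegree ≤ 4 := by
  have h1 : (∑ i, p i).totalDegree ≤ 1 := by simpa using totalDegree_sum_pow_le hp 1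
  refine (totalDegree_sub _ _).trans (max_le ?_ ?_)
  · exact (totalDegree_mul _ _).trans (by linarith [totalDegree_sum_pow_le hp 3])
  · exact (totalDegree_pow _ _).trans (by linarith [totalDegree_sum_pow_le hp 2])

variable (R) in
noncomputable def liftPoly (d : ℕ) : Fin (d + 1) → MvPolynomial (Fin d) R :=
  Fin.snoc X (1 - ∑ i, X i)

theorem totalDegree_liftPoly_le [Nontrivial R] (d : ℕ) (i : Fin (d + 1)) :
    (liftPoly R d i).totalDegree ≤ 1 := by
  induction i using Fin.lastCases with
  | last =>
    rw [liftPoly, Fin.snoc_last]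
    refine (totalDegree_sub _ _).trans (max_le (by simp) ?_)
    simpa using totalDegree_sum_pow_le (p := X) (fun i => (totalDegree_X i).le) 1
  | cast i => rw [liftPoly, Fin.snoc_castSucc, totalDegree_X]

theorem eval_comp_liftPoly (d : ℕ) (x : Fin d → ℝ) : eval x ∘ liftPoly ℝ d = lift d x := by
  ext i
  induction i using Fin.lastCases <;> simp [liftPoly, lift]

end Degree

theorem setIntegral_pos_of_pos_on_isOpen {X : Type*} [MeasurableSpace X] [TopologicalSpace X]
    {μ : Measure X} [μ.IsOpenPosMeasure] {f : X → ℝ} {s U : Set X} (hs : MeasurableSet s)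
    (hf : IntegrableOn f s μ) (hf_nonneg : ∀ x ∈ s, 0 ≤ f x) (hU : IsOpen U) (hU_ne : U.Nonempty)
    (hUs : U ⊆ s) (hf_pos : ∀ x ∈ U, 0 < f x) : 0 < ∫ x in s, f x ∂μ := by
  rw [setIntegral_pos_iff_support_of_nonneg_ae (ae_restrict_of_forall_mem hs hf_nonneg) hf]
  exact (hU.measure_pos μ hU_ne).trans_le <|
    measure_mono fun x hx => ⟨(hf_pos x hx).ne', hUs hx⟩

section Simplex

variable {d : ℕ}

theorem lift_nonneg_of_mem_Td {x : Fin d → ℝ} (hx : x ∈ Td d) (i : Fin (d + 1)) :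
    0 ≤ lift d x i := by
  induction i using Fin.lastCases with
  | last => simpa [lift] using hx.2
  | cast i => simpa [lift] using hx.1 i

theorem isCompact_Td : IsCompact (Td d) := by
  have hTd : Td d = (⋂ i, {x | 0 ≤ x i}) ∩ {x | ∑ i, x i ≤ 1} := by ext; simp [Td]
  have hclosed : IsClosed (Td d) := hTd ▸
    (isClosed_iInter fun i => isClosed_le continuous_const (continuous_apply i)).inter
      (isClosed_le (continuous_finsetSum _ fun i _ => continuous_apply i) continuous_const)
  refine (isCompact_Icc (a := 0) (b := 1)).of_isClosed_subset hclosed fun x hx =>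
    ⟨hx.1, fun i => ?_⟩
  exact (single_le_sum (fun j _ => hx.1 j) (mem_univ i)).trans hx.2

theorem Wg_nonneg_of_mem_Td (γ : ℝ) {x : Fin d → ℝ} (hx : x ∈ Td d) : 0 ≤ Wg d γ x :=
  Real.rpow_nonneg (mul_nonneg (prod_nonneg fun i _ => hx.1 i) (by linarith [hx.2])) γ

theorem Wg_pos (γ : ℝ) {x : Fin d → ℝ} (hx : ∀ i, 0 < x i) (hx_sum : ∑ i, x i < 1) :
    0 < Wg d γ x :=
  Real.rpow_pos_of_pos (mul_pos (prod_pos fun i _ => hx i) (by linarith)) γ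

theorem exists_momentGap_lift_pos (hd : 1 ≤ d) :
    ∃ x : Fin d → ℝ, (∀ i, 0 < x i) ∧ ∑ i, x i < 1 ∧ 0 < momentGap (lift d x) := by
  have hd' : (1 : ℝ) ≤ d := by exact_mod_cast hd
  have hsum : ∑ _i : Fin d, 1 / (3 * (d : ℝ)) = 1 / 3 := by
    rw [sum_const, card_univ, Fintype.card_fin, nsmul_eq_mul]
    field_simp
  refine ⟨fun _ => 1 / (3 * d), fun _ => by positivity, by rw [hsum]; norm_num, ?_⟩
  -- the first and the last homogeneous coordinates are `1/(3d)` and `2/3`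
  refine momentGap_pos (lift_nonneg_of_mem_Td ⟨fun _ => by positivity, by rw [hsum]; norm_num⟩)
    (i := Fin.castSucc ⟨0, hd⟩) (j := Fin.last d) ?_ ?_ ?_
  · simp only [lift, Fin.snoc_castSucc]; positivity
  · simp only [lift, Fin.snoc_last, hsum]; norm_num
  · simp only [lift, Fin.snoc_castSucc, Fin.snoc_last, hsum]
    have : 1 / (3 * (d : ℝ)) ≤ 1 / 3 := one_div_le_one_div_of_le (by norm_num) (by linarith)
    exact ne_of_lt (by linarith)

end Simplex

section Cubature

open MvPolynomial

variable {d : ℕ}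

theorem eval_momentGap_liftPoly (x : Fin d → ℝ) :
    eval x (momentGap (liftPoly ℝ d)) = momentGap (lift d x) := by
  rw [map_momentGap, eval_comp_liftPoly]

theorem setIntegral_eval_momentGap_liftPoly_mul_Wg_pos (hd : 1 ≤ d) {γ : ℝ}
    (hW : IntegrableOn (Wg d γ) (Td d)) :
    0 < ∫ y in Td d, eval y (momentGap (liftPoly ℝ d)) * Wg d γ y := by
  have hcont : Continuous fun y => eval y (momentGap (liftPoly ℝ d)) := continuous_eval _
  obtain ⟨y₀, hy₀, hy₀_sum, hy₀_gap⟩ := exists_momentGap_lift_pos hd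
  refine setIntegral_pos_of_pos_on_isOpen (U := (⋂ i, {y | 0 < y i}) ∩ {y | ∑ i, y i < 1} ∩
      {y | 0 < eval y (momentGap (liftPoly ℝ d))}) isCompact_Td.measurableSet
    (hW.continuousOn_mul hcont.continuousOn isCompact_Td) (fun y hy => ?_) ?_ ?_ ?_ ?_
  · rw [eval_momentGap_liftPoly]
    exact mul_nonneg (momentGap_nonneg (lift_nonneg_of_mem_Td hy)) (Wg_nonneg_of_mem_Td γ hy)
  · exact ((isOpen_iInter_of_finite fun i => isOpen_lt continuous_const (continuous_apply i)).inter
      (isOpen_lt (continuous_finsetSum _ fun i _ => continuous_apply i) continuous_const)).inter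
      (isOpen_lt continuous_const hcont)
  · exact ⟨y₀, ⟨Set.mem_iInter.2 hy₀, hy₀_sum⟩, by rwa [Set.mem_ofPred_eq, eval_momentGap_liftPoly]⟩
  · rintro y ⟨⟨hy, hy_sum⟩, -⟩
    exact ⟨fun i => (Set.mem_iInter.1 hy i).le, le_of_lt hy_sum⟩
  · rintro y ⟨⟨hy, hy_sum⟩, hy_gap⟩
    exact mul_pos hy_gap (Wg_pos γ (Set.mem_iInter.1 hy) hy_sum)

end Cubature

theorem no_positive_cubature_equal_coordinates_general
    (d : ℕ) (hd : 1 ≤ d) (γ : ℝ) :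
    ¬ ∃ (N : ℕ) (_ : 1 ≤ N) (x : Fin N → (Fin d → ℝ)) (lam : Fin N → ℝ),
        (∀ k, x k ∈ Td d) ∧
        (∀ k, 0 < lam k) ∧
        (∀ f : MvPolynomial (Fin d) ℝ, f.totalDegree ≤ 4 →
          wg d γ * ∫ y in Td d, MvPolynomial.eval y f * Wg d γ y
            = ∑ k, lam k * MvPolynomial.eval (x k) f) ∧
        (∀ k, ∀ i j, lift d (x k) i ≠ 0 → lift d (x k) j ≠ 0 →
          lift d (x k) i = lift d (x k) j) := by
  rintro ⟨N, hN, x, lam, -, hlam, hrule, hnodes⟩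
  have hmass : wg d γ * ∫ y in Td d, Wg d γ y = ∑ k, lam k := by
    simpa using hrule 1 (by simp)
  have hmass_pos : 0 < ∑ k, lam k :=
    sum_pos (fun k _ => hlam k) ⟨⟨0, hN⟩, mem_univ _⟩
  have hW : IntegrableOn (Wg d γ) (Td d) := by
    by_contra h
    rw [integral_undef h, mul_zero] at hmass
    linarith
  have hgap : wg d γ * ∫ y in Td d, MvPolynomial.eval y (momentGap (liftPoly ℝ d)) * Wg d γ y
      = 0 := by
    rw [hrule _ (totalDegree_momentGap_le (totalDegree_liftPoly_le d))]
    refine sum_eq_zero fun k _ => ?_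
    rw [eval_momentGap_liftPoly, momentGap_eq_zero_of_nonzero_coords_eq (hnodes k), mul_zero]
  have hwg : wg d γ ≠ 0 := left_ne_zero_of_mul (hmass ▸ hmass_pos.ne')
  exact (setIntegral_eval_momentGap_liftPoly_mul_Wg_pos hd hW).ne'
    ((mul_eq_zero.1 hgap).resolve_left hwg)

/-- There is no positive cubature rule of degree `4` for `W_γ` on `T^d` all of whose nodes,
in homogeneous coordinates, have all their nonzero coordinates equal (i.e. nodes of the form
`(r,…,r,0,…,0)` up to permutation, including the centroid). -/
theorem no_positive_cubature_equal_coordinates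
    (d : ℕ) (hd : 1 ≤ d) (γ : ℝ) (hγ : -1 < γ) :
    ¬ ∃ (N : ℕ) (_ : 1 ≤ N) (x : Fin N → (Fin d → ℝ)) (lam : Fin N → ℝ),
        (∀ k, x k ∈ Td d) ∧
        (∀ k, 0 < lam k) ∧
        (∀ f : MvPolynomial (Fin d) ℝ, f.totalDegree ≤ 4 →
          wg d γ * ∫ y in Td d, MvPolynomial.eval y f * Wg d γ y
            = ∑ k, lam k * MvPolynomial.eval (x k) f) ∧
        (∀ k, ∀ i j, lift d (x k) i ≠ 0 → lift d (x k) j ≠ 0 →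
          lift d (x k) i = lift d (x k) j) :=
  no_positive_cubature_equal_coordinates_general d hd γ
end
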